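/- arXiv:0801.2329 — 7 statements merged into one kernel-verified Lean document; each statement's English description precedes it below -/
import Mathlib

section
/- Let n ≥ 3 and 1 ≤ i ≤ n-2. Define vectors in ℝ^n: J_k = (i+1)e_k + (n-i-1)e_{i+1} for 1 ≤ k ≤ i, J_k = (i+1)e_1 + (n-i-1)e_k for i+2 ≤ k ≤ n, and J = n·e_n. Then the absolute value of the determinant of the n×n matrix whose rows are J_1,…,J_i, J_{i+2},…,J_n, J equals n·(i+1)^i·(n-i-1)^{n-i-1}. In particular, these n vectors are linearly independent. -/
/-!
Pair every row with one coordinate of its support: `J` with `e_n`, `J_n` with `e_1`, `J_1` with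
`e_{i+1}`, `J_k` with `e_k` for `2 ≤ k ≤ i` and `J_k` with `e_k` for `i + 2 ≤ k ≤ n - 1`. The
second coordinate in the support of any row is `e_1`, `e_{i+1}` or `e_n`, which are paired with
`J_n`, `J_1` and `J`; and `J_1` meets `e_1`, `J_n` meets `e_n`. So once the columns are permuted
by this pairing, the matrix is triangular for the order `J, J_n, J_1, …` of the rows, and
`|det|` is the product of the paired entries: `n` once, `i + 1` for `J_2, …, J_i, J_n` and
`n - i - 1` for `J_1, J_{i+2}, …, J_{n-1}`.
-/

open Finset Function

namespace Matrix

variable {m α R : Type*} [Fintype m] [DecidableEq m] [LinearOrder α]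

theorem det_of_blockTriangular_of_injective [CommRing R] {M : Matrix m m R} {b : m → α}
    (hM : M.BlockTriangular b) (hb : Injective b) : M.det = ∏ r, M r r := by
  rw [hM.det, prod_image fun r _ s _ h => hb h]
  refine prod_congr rfl fun r _ => ?_
  let : Unique {s // b s = b r} := ⟨⟨⟨r, rfl⟩⟩, fun s => Subtype.ext (hb s.2)⟩
  exact det_unique (M.toSquareBlock b (b r))

theorem abs_det_eq_abs_prod_of_blockTriangular [CommRing R] [LinearOrder R]
    [IsStrictOrderedRing R] {M : Matrix m m R} {σ : m → m} (hσ : Injective σ) {b : m → α}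
    (hb : Injective b) (hM : (M.submatrix id σ).BlockTriangular b) :
    |M.det| = |∏ r, M r (σ r)| := by
  rw [← abs_det_submatrix_equiv_equiv (Equiv.refl m)
    (Equiv.ofBijective σ hσ.bijective_of_finite) M]
  exact congrArg abs (det_of_blockTriangular_of_injective hM hb)

end Matrix

theorem Finset.prod_range_ite_lt {M : Type*} [CommMonoid M] (x y : M) {k m : ℕ} (h : k ≤ m) :
    ∏ r ∈ range m, (if r < k then x else y) = x ^ k * y ^ (m - k) := by
  obtain ⟨l, rfl⟩ := Nat.exists_eq_add_of_le h
  rw [prod_range_add, prod_congr rfl fun r hr => if_pos (mem_range.mp hr),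
    prod_congr rfl fun r _ => if_neg (by omega), prod_const, prod_const, card_range, card_range,
    Nat.add_sub_cancel_left]

namespace JMatrix

def entry (n i r c : ℕ) : ℝ :=
  if r < i then
    (if c = r then ((i : ℝ) + 1) else 0) + (if c = i then ((n : ℝ) - i - 1) else 0)
  else if r < n - 1 then
    (if c = 0 then ((i : ℝ) + 1) else 0) + (if c = r + 1 then ((n : ℝ) - i - 1) else 0)
  else (if c = n - 1 then (n : ℝ) else 0)

-- The pairing of the header in 0-based indices: row `r < i` is `J_{r+1}`, row `i ≤ r < n - 1` is
-- `J_{r+2}` and row `n - 1` is `J`.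
def diagCol (n i r : ℕ) : ℕ :=
  if r = n - 1 then n - 1 else if r = n - 2 then 0 else if r = 0 then i
  else if r < i then r else r + 1

def elimRank (n r : ℕ) : ℕ :=
  if r = n - 1 then 0 else if r = n - 2 then 1 else if r = 0 then 2 else r + 3

variable {n i : ℕ}

theorem diagCol_lt (hi2 : i ≤ n - 2) {r : ℕ} (hr : r < n) : diagCol n i r < n := by
  unfold diagCol
  split_ifs <;> omega

theorem diagCol_injective (hn : 3 ≤ n) (hi1 : 1 ≤ i) (hi2 : i ≤ n - 2) :
    Injective (diagCol n i) := by
  intro r s h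
  unfold diagCol at h
  split_ifs at h <;> omega

theorem elimRank_injective : Injective (elimRank n) := by
  intro r s h
  unfold elimRank at h
  split_ifs at h <;> omega

theorem entry_diagCol_eq_zero (hn : 3 ≤ n) (hi1 : 1 ≤ i) (hi2 : i ≤ n - 2) {r c : ℕ}
    (hr : r < n) (hc : c < n) (hrc : elimRank n r < elimRank n c) :
    entry n i r (diagCol n i c) = 0 := by
  unfold elimRank at hrc
  unfold entry diagCol
  split_ifs at hrc ⊢ <;> first | contradiction | omega | simp

theorem prod_entry_diagCol (hn : 3 ≤ n) (hi1 : 1 ≤ i) (hi2 : i ≤ n - 2) :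
    ∏ r ∈ range n, entry n i r (diagCol n i r) =
      n * ((i : ℝ) + 1) ^ i * ((n : ℝ) - i - 1) ^ (n - i - 1) := by
  obtain ⟨k, rfl⟩ : ∃ k, n = k + 3 := ⟨n - 3, by omega⟩
  obtain ⟨j, rfl⟩ : ∃ j, i = j + 1 := ⟨i - 1, by omega⟩
  have hfirst : entry (k + 3) (j + 1) 0 (diagCol (k + 3) (j + 1) 0) =
      ((k + 3 : ℕ) : ℝ) - (j + 1 : ℕ) - 1 := by simp [entry, diagCol]
  have hmid : ∀ r ∈ range k, entry (k + 3) (j + 1) (r + 1) (diagCol (k + 3) (j + 1) (r + 1)) =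
      if r < j then ((j + 1 : ℕ) : ℝ) + 1 else ((k + 3 : ℕ) : ℝ) - (j + 1 : ℕ) - 1 := by
    intro r hr
    rw [mem_range] at hr
    unfold entry diagCol
    split_ifs <;> first | contradiction | omega | simp
  have hpenult : entry (k + 3) (j + 1) (k + 1) (diagCol (k + 3) (j + 1) (k + 1)) =
      ((j + 1 : ℕ) : ℝ) + 1 := by simp [entry, diagCol, show ¬k < j by omega]
  have hlast : entry (k + 3) (j + 1) (k + 2) (diagCol (k + 3) (j + 1) (k + 2)) =
      ((k + 3 : ℕ) : ℝ) := by simp [entry, diagCol, show ¬k + 2 ≤ j by omega]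
  rw [prod_range_succ, prod_range_succ, prod_range_succ', prod_congr rfl hmid,
    prod_range_ite_lt _ _ (by omega : j ≤ k), hfirst, hpenult, hlast,
    show k + 3 - (j + 1) - 1 = k - j + 1 by omega]
  ring

end JMatrix

open JMatrix

/-- The determinant of the matrix with rows J_1,…,J_i, J_{i+2},…,J_n, J = n·e_n
has absolute value n·(i+1)^i·(n-i-1)^{n-i-1}; in particular the rows are
linearly independent. (Indices are 0-based: row r for r < i is J_{r+1},
row r for i ≤ r < n-1 is J_{r+2}, row n-1 is J.) -/
theorem stmt_0 (n i : ℕ) (hn : 3 ≤ n) (hi1 : 1 ≤ i) (hi2 : i ≤ n - 2)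
    (M : Matrix (Fin n) (Fin n) ℝ)
    (hM : ∀ r c : Fin n, M r c =
      if (r : ℕ) < i then
        (if (c : ℕ) = (r : ℕ) then ((i : ℝ) + 1) else 0) +
        (if (c : ℕ) = i then ((n : ℝ) - i - 1) else 0)
      else if (r : ℕ) < n - 1 then
        (if (c : ℕ) = 0 then ((i : ℝ) + 1) else 0) +
        (if (c : ℕ) = (r : ℕ) + 1 then ((n : ℝ) - i - 1) else 0)
      else (if (c : ℕ) = n - 1 then (n : ℝ) else 0)) :
    |M.det| = n * ((i : ℝ) + 1) ^ i * ((n : ℝ) - i - 1) ^ (n - i - 1) ∧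
      LinearIndependent ℝ M := by
  let σ : Fin n → Fin n := fun r => ⟨diagCol n i r, diagCol_lt hi2 r.isLt⟩
  have hσ : Injective σ := fun r s h =>
    Fin.ext (diagCol_injective hn hi1 hi2 (congrArg Fin.val h))
  let rank : Fin n → ℕᵒᵈ := fun r => OrderDual.toDual (elimRank n r)
  have hrank : Injective rank := fun r s h => Fin.ext (elimRank_injective h)
  have htri : (M.submatrix id σ).BlockTriangular rank := fun r c hrc =>
    (hM r (σ c)).trans (entry_diagCol_eq_zero hn hi1 hi2 r.isLt c.isLt hrc)
  have hpos : 0 < (n : ℝ) * ((i : ℝ) + 1) ^ i * ((n : ℝ) - i - 1) ^ (n - i - 1) := by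
    have : (i : ℝ) + 2 ≤ n := by exact_mod_cast (by omega : i + 2 ≤ n)
    have : (0 : ℝ) < n - i - 1 := by linarith
    positivity
  have hdet : |M.det| = n * ((i : ℝ) + 1) ^ i * ((n : ℝ) - i - 1) ^ (n - i - 1) := by
    rw [Matrix.abs_det_eq_abs_prod_of_blockTriangular hσ hrank htri, ← abs_of_pos hpos,
      ← prod_entry_diagCol hn hi1 hi2, ← Fin.prod_univ_eq_prod_range]
    exact congrArg _ (prod_congr rfl fun r _ => hM r (σ r))
  refine ⟨hdet, Matrix.linearIndependent_rows_of_det_ne_zero fun h => ?_⟩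
  rw [h, abs_zero] at hdet
  exact hpos.ne hdet
end

section
/- Let n ≥ 3 and 1 ≤ i ≤ n-2. Define the cone Q ⊆ ℝ^n as the set of x ∈ ℝ^n with x_k ≥ 0 for all k ∈ [n] and -(n-i-1)(x_1+⋯+x_i) + (i+1)(x_{i+1}+⋯+x_n) ≥ 0. Then Q equals the cone generated (with nonnegative real coefficients) by the (i+1)(n-i) vectors {n·e_k : i+1 ≤ k ≤ n} ∪ {(i+1)e_j + (n-i-1)e_k : 1 ≤ j ≤ i, i+1 ≤ k ≤ n}. -/
open scoped NNReal

/-!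
With `s` the first `i` coordinates, `a = n - i - 1`, `b = i + 1` and `c = n`, the cone is
`{x ≥ 0 | a T ≤ b S}`, where `T` and `S` are the sums of the coordinates of `x` inside and
outside `s`; the argument works for any positive `a`, `b`, `c`. If `S = 0`, the inequality forces
`x = 0`. Otherwise `x` has the explicit decomposition
`x = ∑_{j ∈ s, k ∉ s} (x_j x_k / (b S)) (b e_j + a e_k) + ∑_{k ∉ s} ((b S - a T) x_k / (b S c)) (c e_k)`,
whose coefficients are nonnegative exactly because `a T ≤ b S`.
-/

open Finset

lemma Submodule.real_smul_mem_of_nonneg {E : Type*} [AddCommGroup E] [Module ℝ E]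
    (p : Submodule ℝ≥0 E) {r : ℝ} (hr : 0 ≤ r) {v : E} (hv : v ∈ p) : r • v ∈ p := by
  simpa [NNReal.smul_def, Real.coe_toNNReal r hr] using p.smul_mem r.toNNReal hv

section WeightedCone

variable {ι : Type*} [Fintype ι] [DecidableEq ι]

def weightedCone (s : Finset ι) (a b : ℝ) : Submodule ℝ≥0 (ι → ℝ) where
  carrier := {x | (∀ k, 0 ≤ x k) ∧ a * ∑ k ∈ s, x k ≤ b * ∑ k ∈ sᶜ, x k}
  zero_mem' := by simp
  add_mem' := by
    rintro x y ⟨hx, hxs⟩ ⟨hy, hys⟩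
    refine ⟨fun k => add_nonneg (hx k) (hy k), ?_⟩
    simp only [Pi.add_apply, sum_add_distrib]
    linarith
  smul_mem' := by
    rintro c x ⟨hx, hxs⟩
    refine ⟨fun k => mul_nonneg c.2 (hx k), ?_⟩
    simp only [NNReal.smul_def, Pi.smul_apply, smul_eq_mul, ← mul_sum]
    nlinarith [c.2]

lemma mem_weightedCone {s : Finset ι} {a b : ℝ} {x : ι → ℝ} :
    x ∈ weightedCone s a b ↔ (∀ k, 0 ≤ x k) ∧ a * ∑ k ∈ s, x k ≤ b * ∑ k ∈ sᶜ, x k :=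
  Iff.rfl

def coneGenerators (s : Finset ι) (a b c : ℝ) : Set (ι → ℝ) :=
  {v | (∃ k ∉ s, v = Pi.single k c) ∨ ∃ j ∈ s, ∃ k ∉ s, v = Pi.single j b + Pi.single k a}

variable {s : Finset ι} {a b c : ℝ}

lemma coneGenerators_subset_weightedCone (ha : 0 ≤ a) (hb : 0 ≤ b) (hc : 0 ≤ c) :
    coneGenerators s a b c ⊆ weightedCone s a b := by
  rintro v (⟨k, hk, rfl⟩ | ⟨j, hj, k, hk, rfl⟩)
  · refine ⟨fun m => ?_, ?_⟩
    · rw [Pi.single_apply]; split_ifs <;> simp [hc]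
    · simp only [sum_pi_single', hk, if_false, mul_zero, mem_compl, not_false_eq_true, if_true]
      positivity
  · refine ⟨fun m => ?_, ?_⟩
    · simp only [Pi.add_apply, Pi.single_apply]
      split_ifs <;> simp [ha, hb, add_nonneg]
    · simp [sum_add_distrib, sum_pi_single', hj, hk, mul_comm]

lemma eq_sum_smul_pi_single (x : ι → ℝ) (hb : b ≠ 0) (hc : c ≠ 0)
    (hS : ∑ k ∈ sᶜ, x k ≠ 0) :
    x = ∑ j ∈ s, ∑ k ∈ sᶜ, (x j * x k / (b * ∑ k ∈ sᶜ, x k)) • (Pi.single j b + Pi.single k a)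
      + ∑ k ∈ sᶜ, ((b * ∑ k ∈ sᶜ, x k - a * ∑ j ∈ s, x j) * x k / (b * (∑ k ∈ sᶜ, x k) * c)) •
          Pi.single k c := by
  set S := ∑ k ∈ sᶜ, x k
  set T := ∑ j ∈ s, x j
  ext m
  simp only [Finset.sum_apply, Pi.add_apply, Pi.smul_apply, smul_eq_mul, mul_add, sum_add_distrib]
  simp only [Pi.single_apply, mul_ite, mul_zero, ← ite_sum_zero, sum_ite_eq]
  by_cases hm : m ∈ s
  · have hm' : m ∉ sᶜ := by simpa using hm
    simp only [hm, hm', if_true, if_false, add_zero]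
    rw [← sum_mul, ← sum_div, ← mul_sum]
    field_simp
    rfl
  · have hm' : m ∈ sᶜ := by simpa using hm
    simp only [hm, hm', if_true, if_false, zero_add]
    rw [← sum_mul, ← sum_div, ← sum_mul]
    field_simp
    ring

lemma eq_zero_of_mem_weightedCone_of_sum_compl_eq_zero (ha : 0 < a) {x : ι → ℝ}
    (hx : x ∈ weightedCone s a b) (hS : ∑ k ∈ sᶜ, x k = 0) : x = 0 := by
  obtain ⟨hx, hxs⟩ := hx
  have hT : ∑ j ∈ s, x j = 0 := by
    have := sum_nonneg fun j (_ : j ∈ s) => hx j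
    rw [hS, mul_zero] at hxs
    nlinarith
  ext k
  by_cases hk : k ∈ s
  · exact (sum_eq_zero_iff_of_nonneg fun j _ => hx j).1 hT k hk
  · exact (sum_eq_zero_iff_of_nonneg fun j _ => hx j).1 hS k (mem_compl.2 hk)

lemma weightedCone_le_span (ha : 0 < a) (hb : 0 < b) (hc : 0 < c) :
    weightedCone s a b ≤ Submodule.span ℝ≥0 (coneGenerators s a b c) := by
  intro x hxC
  rcases (sum_nonneg fun k (_ : k ∈ sᶜ) => hxC.1 k).eq_or_lt with hS | hS
  · rw [eq_zero_of_mem_weightedCone_of_sum_compl_eq_zero ha hxC hS.symm]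
    exact Submodule.zero_mem _
  obtain ⟨hx, hxs⟩ := hxC
  rw [eq_sum_smul_pi_single x hb.ne' hc.ne' hS.ne']
  refine Submodule.add_mem _ (Submodule.sum_mem _ fun j hj => Submodule.sum_mem _ fun k hk => ?_)
    (Submodule.sum_mem _ fun k hk => ?_)
  · refine Submodule.real_smul_mem_of_nonneg _ (by have := hx j; have := hx k; positivity)
      (Submodule.subset_span (Or.inr ⟨j, hj, k, mem_compl.1 hk, rfl⟩))
  · refine Submodule.real_smul_mem_of_nonneg _ ?_
      (Submodule.subset_span (Or.inl ⟨k, mem_compl.1 hk, rfl⟩))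
    exact div_nonneg (mul_nonneg (by linarith) (hx k)) (by positivity)

theorem weightedCone_eq_span (ha : 0 < a) (hb : 0 < b) (hc : 0 < c) :
    weightedCone s a b = Submodule.span ℝ≥0 (coneGenerators s a b c) :=
  le_antisymm (weightedCone_le_span ha hb hc)
    (Submodule.span_le.2 (coneGenerators_subset_weightedCone ha.le hb.le hc.le))

end WeightedCone

theorem stmt_3_general (n i : ℕ) (hi1 : 1 ≤ i) (hi2 : i ≤ n - 2)
    (e : Fin n → Fin n → ℝ) (he : ∀ j m, e j m = if m = j then 1 else 0)
    (Q : Set (Fin n → ℝ))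
    (hQ : Q = {x | (∀ k, 0 ≤ x k) ∧
      0 ≤ -((n : ℝ) - i - 1) * ∑ k ∈ Finset.univ.filter (fun k : Fin n => (k : ℕ) < i), x k
        + ((i : ℝ) + 1) * ∑ k ∈ Finset.univ.filter (fun k : Fin n => i ≤ (k : ℕ)), x k})
    (G : Set (Fin n → ℝ))
    (hG : G = {v | (∃ k : Fin n, i ≤ (k : ℕ) ∧ v = (n : ℝ) • e k) ∨
      (∃ j k : Fin n, (j : ℕ) < i ∧ i ≤ (k : ℕ) ∧
        v = ((i : ℝ) + 1) • e j + ((n : ℝ) - i - 1) • e k)}) :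
    Q = (Submodule.span ℝ≥0 G : Submodule ℝ≥0 (Fin n → ℝ)) := by
  set s := Finset.univ.filter (fun k : Fin n => (k : ℕ) < i)
  have hs : sᶜ = Finset.univ.filter (fun k : Fin n => i ≤ (k : ℕ)) := by
    ext k; simp [s]
  have hsmul_e : ∀ j (r : ℝ), r • e j = Pi.single j r := by
    intro j r; ext m; simp [he, Pi.single_apply]
  have hni : (i : ℝ) + 2 ≤ n := by exact_mod_cast (by omega : i + 2 ≤ n)
  have hQ' : Q = weightedCone s ((n : ℝ) - i - 1) ((i : ℝ) + 1) := by
    ext x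
    rw [hQ, SetLike.mem_coe, mem_weightedCone, hs, Set.mem_ofPred_eq]
    exact and_congr_right fun _ => by constructor <;> intro h <;> linarith
  have hG' : G = coneGenerators s ((n : ℝ) - i - 1) ((i : ℝ) + 1) n := by
    ext v
    simp [hG, coneGenerators, hsmul_e, s]
  rw [hQ', hG', weightedCone_eq_span (by linarith) (by positivity) (by linarith)]

/-- The cone {x ≥ 0, L(x) ≥ 0} equals the cone generated by the (i+1)(n-i)
vectors n·e_k (i+1 ≤ k ≤ n) and (i+1)e_j+(n-i-1)e_k (1 ≤ j ≤ i, i+1 ≤ k ≤ n),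
here written 0-based. -/
theorem stmt_3 (n i : ℕ) (hn : 3 ≤ n) (hi1 : 1 ≤ i) (hi2 : i ≤ n - 2)
    (e : Fin n → Fin n → ℝ) (he : ∀ j m, e j m = if m = j then 1 else 0)
    (Q : Set (Fin n → ℝ))
    (hQ : Q = {x | (∀ k, 0 ≤ x k) ∧
      0 ≤ -((n : ℝ) - i - 1) * ∑ k ∈ Finset.univ.filter (fun k : Fin n => (k : ℕ) < i), x k
        + ((i : ℝ) + 1) * ∑ k ∈ Finset.univ.filter (fun k : Fin n => i ≤ (k : ℕ)), x k})
    (G : Set (Fin n → ℝ))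
    (hG : G = {v | (∃ k : Fin n, i ≤ (k : ℕ) ∧ v = (n : ℝ) • e k) ∨
      (∃ j k : Fin n, (j : ℕ) < i ∧ i ≤ (k : ℕ) ∧
        v = ((i : ℝ) + 1) • e j + ((n : ℝ) - i - 1) • e k)}) :
    Q = (Submodule.span ℝ≥0 G : Submodule ℝ≥0 (Fin n → ℝ)) :=
  stmt_3_general n i hi1 hi2 e he Q hQ G hG
end

section
/- Let n ≥ 3, 1 ≤ i ≤ n-2, and let A ⊆ ℕ^n be the set of all vectors e_{j_1} + ⋯ + e_{j_n} with j_k ∈ [n] for k ∈ {1,…,i,n} and j_k ∈ [n]∖[i] for i+1 ≤ k ≤ n-1. Then the ℝ-span of A is all of ℝ^n; in particular the cone ℝ_+A has dimension n. -/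
/-!
Counting the letters of a word `j : ι → σ` gives the vector `∑ₖ e_{j k}`. The constant word
`d` gives `|ι| • e_d`, so `e_d` lies in the span for every admissible letter `d`. For an arbitrary
letter `c`, the word that writes `d` at the constrained positions `K` and `c` at the remaining
positions `U` gives `#K • e_d + #U • e_c`; as `U` is nonempty, subtracting the first part leaves a
nonzero multiple of `e_c`.
-/

open Finset

theorem Submodule.mem_of_nsmul_mem {R M : Type*} [DivisionSemiring R] [CharZero R]
    [AddCommMonoid M] [Module R M] (S : Submodule R M) {m : ℕ} (hm : m ≠ 0) {x : M}
    (h : m • x ∈ S) : x ∈ S := by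
  rw [← Nat.cast_smul_eq_nsmul R] at h
  exact (S.smul_mem_iff (Nat.cast_ne_zero.mpr hm)).mp h

theorem span_letterCounts_eq_top {ι σ : Type*} [Fintype ι] [Fintype σ] [DecidableEq σ]
    (p : ι → Prop) (q : σ → Prop) (hU : ∃ k, ¬ p k) (hq : ∃ d, q d) :
    Submodule.span ℝ {v : σ → ℝ | ∃ j : ι → σ, (∀ k, p k → q (j k)) ∧
      v = ∑ k, Pi.single (j k) 1} = ⊤ := by
  classical
  set S := Submodule.span ℝ {v : σ → ℝ | ∃ j : ι → σ, (∀ k, p k → q (j k)) ∧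
      v = ∑ k, Pi.single (j k) 1}
  obtain ⟨k₀, hk₀⟩ := hU
  obtain ⟨d, hd⟩ := hq
  have hd_mem : Pi.single d 1 ∈ S := by
    refine S.mem_of_nsmul_mem ((Fintype.card_pos_iff.mpr ⟨k₀⟩).ne') ?_
    refine Submodule.subset_span ⟨fun _ => d, fun _ _ => hd, ?_⟩
    rw [sum_const, card_univ]
  have hU_card : #{k | ¬ p k} ≠ 0 := card_ne_zero.mpr ⟨k₀, by simpa using hk₀⟩
  have hc_mem (c : σ) : Pi.single c 1 ∈ S := by
    have hword : #{k | p k} • Pi.single d (1 : ℝ) + #{k | ¬ p k} • Pi.single c 1 ∈ S := by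
      refine Submodule.subset_span ⟨fun k => if p k then d else c,
        fun k hk => by simpa [hk] using hd, ?_⟩
      simp only [apply_ite (fun m => Pi.single m (1 : ℝ)), sum_ite, sum_const]
    exact S.mem_of_nsmul_mem hU_card
      ((S.add_mem_iff_right (S.smul_of_tower_mem _ hd_mem)).mp hword)
  rw [eq_top_iff, ← (Pi.basisFun ℝ σ).span_eq, Submodule.span_le]
  rintro _ ⟨c, rfl⟩
  simpa using hc_mem c

theorem stmt_11_general (n i : ℕ) (hn : 3 ≤ n) (hi2 : i ≤ n - 2)
    (A : Set (Fin n → ℝ))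
    (hA : A = {P | ∃ j : Fin n → Fin n,
      (∀ k : Fin n, i ≤ (k : ℕ) → (k : ℕ) ≤ n - 2 → i ≤ ((j k : ℕ))) ∧
      P = fun m => ∑ k : Fin n, if j k = m then (1 : ℝ) else 0}) :
    Submodule.span ℝ A = ⊤ := by
  have hcount (j : Fin n → Fin n) :
      (fun m => ∑ k : Fin n, if j k = m then (1 : ℝ) else 0) = ∑ k, Pi.single (j k) 1 := by
    ext m
    simp [Finset.sum_apply, Pi.single_apply, eq_comm]
  have hspan := span_letterCounts_eq_top (fun k : Fin n => i ≤ (k : ℕ) ∧ (k : ℕ) ≤ n - 2)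
    (fun m : Fin n => i ≤ (m : ℕ)) ⟨⟨n - 1, by omega⟩, by simp only [not_and]; omega⟩
    ⟨⟨i, by omega⟩, le_rfl⟩
  simpa only [hA, hcount, and_imp] using hspan

/-- The exponent vectors e_{j_1}+⋯+e_{j_n} (with j_k unrestricted for
k ∈ {1,…,i,n} and j_k ∈ [n]∖[i] for i+1 ≤ k ≤ n-1) span ℝ^n. -/
theorem stmt_11 (n i : ℕ) (hn : 3 ≤ n) (hi1 : 1 ≤ i) (hi2 : i ≤ n - 2)
    (A : Set (Fin n → ℝ))
    (hA : A = {P | ∃ j : Fin n → Fin n,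
      (∀ k : Fin n, i ≤ (k : ℕ) → (k : ℕ) ≤ n - 2 → i ≤ ((j k : ℕ))) ∧
      P = fun m => ∑ k : Fin n, if j k = m then (1 : ℝ) else 0}) :
    Submodule.span ℝ A = ⊤ :=
  stmt_11_general n i hn hi2 A hA
end

section
/- Let n ≥ 3, 1 ≤ i ≤ n-2, and let A ⊆ ℕ^n be the set of all vectors e_{j_1} + ⋯ + e_{j_n} with j_k ∈ [n] for k ∈ {1,…,i,n} and j_k ∈ [n]∖[i] for i+1 ≤ k ≤ n-1. Then A = {α ∈ ℕ^n : α_1 + ⋯ + α_n = n and α_1 + ⋯ + α_i ≤ i+1}. -/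
/-!
The exponent of `x_{j 1} ⋯ x_{j n}` is the vector of fibre sizes of `j`. A `j` with fibre sizes
`α` mapping the positions `S = {i+1, …, n-1}` into `T = [n] ∖ [i]` exists iff `|α| = n` and `α`
puts mass at least `#S` on `T`: a bijection between the positions and the "boxes"
`Σ m, Fin (α m)` can be twisted by a permutation of the boxes so that `S` lands over `T`.
As `#S = n - 1 - i`, the second condition says that `α` puts mass at most `i + 1` on `[i]`.
-/

open Finset

section FiberCard

variable {ι κ : Type*} [Fintype ι] [DecidableEq κ]

def fiberCard (j : ι → κ) (m : κ) : ℕ := ∑ k, if j k = m then 1 else 0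

lemma sum_fiberCard (j : ι → κ) (U : Finset κ) :
    ∑ m ∈ U, fiberCard j m = #{k | j k ∈ U} := by
  simp only [fiberCard]
  rw [sum_comm]
  simp [sum_ite_eq]

lemma fiberCard_comp_equiv {X : Type*} [Fintype X] (e : ι ≃ X) (f : X → κ) (m : κ) :
    fiberCard (f ∘ e) m = fiberCard f m :=
  e.sum_comp fun x => if f x = m then 1 else 0

lemma fiberCard_sigma_fst [Fintype κ] (α : κ → ℕ) (m : κ) :
    fiberCard (Sigma.fst : (Σ m, Fin (α m)) → κ) m = α m := by
  simp only [fiberCard]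
  rw [Fintype.sum_sigma]
  simp [apply_ite]

variable [Fintype κ]

lemma exists_fiberCard_eq_of_card_le (α : κ → ℕ) (hα : ∑ m, α m = Fintype.card ι)
    (S : Finset ι) (T : Finset κ) (hST : #S ≤ ∑ m ∈ T, α m) :
    ∃ j : ι → κ, (∀ k ∈ S, j k ∈ T) ∧ fiberCard j = α := by
  obtain ⟨f⟩ : Nonempty (ι ≃ Σ m, Fin (α m)) := Fintype.card_eq.mp (by simp [hα])
  have hT : #(S.map f.toEmbedding) ≤ #(T.sigma fun m => (univ : Finset (Fin (α m)))) := by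
    simpa [card_sigma] using hST
  obtain ⟨Y, hYT, hYS⟩ := exists_subset_card_eq hT
  let g : {x // x ∈ S.map f.toEmbedding} ≃ {x // x ∈ Y} :=
    Fintype.equivOfCardEq (by simp only [Fintype.card_coe, hYS])
  refine ⟨Sigma.fst ∘ f.trans g.extendSubtype, fun k hk => ?_, funext fun m => ?_⟩
  · simpa using hYT (g.extendSubtype_mem (f k) (mem_map_of_mem _ hk))
  · rw [fiberCard_comp_equiv, fiberCard_sigma_fst]

theorem exists_fiberCard_eq_iff (α : κ → ℕ) (S : Finset ι) (T : Finset κ) :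
    (∃ j : ι → κ, (∀ k ∈ S, j k ∈ T) ∧ fiberCard j = α) ↔
      ∑ m, α m = Fintype.card ι ∧ #S ≤ ∑ m ∈ T, α m := by
  constructor
  · rintro ⟨j, hj, rfl⟩
    refine ⟨by simp [sum_fiberCard], ?_⟩
    rw [sum_fiberCard]
    exact card_le_card fun k hk => by simpa using hj k hk
  · rintro ⟨hα, hST⟩
    exact exists_fiberCard_eq_of_card_le α hα S T hST

end FiberCard

lemma Fin.card_filter_le_val_le_sub_two {n : ℕ} (hn : 2 ≤ n) (i : ℕ) :
    #{k : Fin n | i ≤ (k : ℕ) ∧ (k : ℕ) ≤ n - 2} = n - 1 - i := by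
  have h : ({k | i ≤ (k : ℕ) ∧ (k : ℕ) ≤ n - 2} : Finset (Fin n))
      = ({k | (k : ℕ) < n - 1} : Finset (Fin n)) \ ({k | (k : ℕ) < i} : Finset (Fin n)) := by
    ext k
    simp only [mem_filter, mem_sdiff, mem_univ, true_and]
    omega
  rw [h, card_sdiff, ← filter_and, Fin.card_filter_val_lt]
  simp only [← lt_min_iff, Fin.card_filter_val_lt]
  omega

theorem stmt_12_general (n i : ℕ) (hn : 3 ≤ n)
    (A : Set (Fin n → ℕ))
    (hA : A = {P | ∃ j : Fin n → Fin n,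
      (∀ k : Fin n, i ≤ (k : ℕ) → (k : ℕ) ≤ n - 2 → i ≤ ((j k : ℕ))) ∧
      P = fun m => ∑ k : Fin n, if j k = m then 1 else 0}) :
    A = {α : Fin n → ℕ | ∑ k, α k = n ∧
      (∑ k ∈ Finset.univ.filter (fun k : Fin n => (k : ℕ) < i), α k) ≤ i + 1} := by
  subst hA
  ext α
  have hsplit := sum_filter_add_sum_filter_not univ (fun k : Fin n => (k : ℕ) < i) α
  have hfiber := exists_fiberCard_eq_iff α {k : Fin n | i ≤ (k : ℕ) ∧ (k : ℕ) ≤ n - 2}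
    {m | i ≤ (m : ℕ)}
  simp only [mem_filter, mem_univ, true_and, not_lt, and_imp, Fintype.card_fin,
    Fin.card_filter_le_val_le_sub_two (by omega : 2 ≤ n)] at hfiber hsplit
  simp only [Set.mem_ofPred_eq, eq_comm (a := α)]
  refine hfiber.trans ?_
  omega

/-- The exponent set A equals {α ∈ ℕ^n : |α| = n, α_1+⋯+α_i ≤ i+1}. -/
theorem stmt_12 (n i : ℕ) (hn : 3 ≤ n) (hi1 : 1 ≤ i) (hi2 : i ≤ n - 2)
    (A : Set (Fin n → ℕ))
    (hA : A = {P | ∃ j : Fin n → Fin n,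
      (∀ k : Fin n, i ≤ (k : ℕ) → (k : ℕ) ≤ n - 2 → i ≤ ((j k : ℕ))) ∧
      P = fun m => ∑ k : Fin n, if j k = m then 1 else 0}) :
    A = {α : Fin n → ℕ | ∑ k, α k = n ∧
      (∑ k ∈ Finset.univ.filter (fun k : Fin n => (k : ℕ) < i), α k) ≤ i + 1} :=
  stmt_12_general n i hn A hA
end

section
/- Let n ≥ 3 and 1 ≤ i ≤ n-2, and let A = {α ∈ ℕ^n : |α| = n, α_1+⋯+α_i ≤ i+1}, where |α| = α_1+⋯+α_n. Then the monoid ℕA generated by A equals {β ∈ ℕ^n : n divides |β|, and β_1+⋯+β_i ≤ (i+1)·(|β|/n)}. -/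
lemma exists_sub {n : ℕ} (T : Finset (Fin n)) (β : Fin n → ℕ) (s : ℕ)
    (hs : s ≤ ∑ k ∈ T, β k) :
    ∃ γ : Fin n → ℕ, (∀ k, γ k ≤ β k) ∧ (∀ k ∉ T, γ k = 0) ∧ ∑ k ∈ T, γ k = s := by
  induction s with
  | zero => exact ⟨0, fun k => Nat.zero_le _, fun k _ => rfl, by simp⟩
  | succ s ih =>
    obtain ⟨γ, h1, h2, h3⟩ := ih (by omega)
    have hex : ∃ k ∈ T, γ k < β k := by
      by_contra h
      push_neg at h
      have : ∑ k ∈ T, β k ≤ ∑ k ∈ T, γ k := Finset.sum_le_sum h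
      omega
    obtain ⟨k, hkT, hk⟩ := hex
    refine ⟨Function.update γ k (γ k + 1), ?_, ?_, ?_⟩
    · intro j
      rcases eq_or_ne j k with rfl | h
      · simp; omega
      · rw [Function.update_of_ne h]; exact h1 j
    · intro j hj
      rw [Function.update_of_ne (by rintro rfl; exact hj hkT)]
      exact h2 j hj
    · rw [Finset.sum_update_of_mem hkT, Finset.sdiff_singleton_eq_erase]
      rw [← Finset.add_sum_erase T γ hkT] at h3
      omega

lemma key_14 (n i : ℕ) (hin : i + 2 ≤ n) (t : ℕ) :
    ∀ β : Fin n → ℕ, ∑ k, β k = n * t →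
      (∑ k ∈ Finset.univ.filter (fun k : Fin n => (k : ℕ) < i), β k) ≤ (i + 1) * t →
      β ∈ AddSubmonoid.closure {α : Fin n → ℕ | ∑ k, α k = n ∧
        (∑ k ∈ Finset.univ.filter (fun k : Fin n => (k : ℕ) < i), α k) ≤ i + 1} := by
  set T : Finset (Fin n) := Finset.univ.filter (fun k : Fin n => (k : ℕ) < i) with hT
  induction t with
  | zero =>
    intro β h1 h2
    have : β = 0 := by
      funext k
      have := Finset.sum_eq_zero_iff.mp (show ∑ k, β k = 0 by simpa using h1) k (Finset.mem_univ k)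
      simpa using this
    rw [this]
    exact AddSubmonoid.zero_mem _
  | succ t ih =>
    intro β h1 h2
    set S := ∑ k ∈ T, β k with hS
    set s := S - (i + 1) * t with hs
    have hmul1 : (i + 1) * (t + 1) = (i + 1) * t + (i + 1) := by ring
    have hmul2 : n * (t + 1) = n * t + n := by ring
    have hmul3 : (i + 1) * t ≤ n * t := Nat.mul_le_mul_right t (by omega)
    have hStot : S ≤ n * (t + 1) := by
      rw [← h1]
      exact Finset.sum_le_sum_of_subset (Finset.subset_univ T)
    have hsn : s ≤ i + 1 := by omega
    -- γ1 on T with sum s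
    obtain ⟨γ1, hγ1le, hγ1out, hγ1sum⟩ := exists_sub T β s (by omega)
    -- γ2 on Tᶜ with sum n - s
    have hTc : ∑ k ∈ Tᶜ, β k = n * (t + 1) - S := by
      have := Finset.sum_add_sum_compl T β
      omega
    obtain ⟨γ2, hγ2le, hγ2out, hγ2sum⟩ := exists_sub Tᶜ β (n - s) (by omega)
    set α : Fin n → ℕ := γ1 + γ2 with hα
    have hγ1univ : ∑ k, γ1 k = s := by
      rw [← hγ1sum]
      exact (Finset.sum_subset (Finset.subset_univ T) (fun k _ hk => hγ1out k hk)).symm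
    have hγ2univ : ∑ k, γ2 k = n - s := by
      rw [← hγ2sum]
      exact (Finset.sum_subset (Finset.subset_univ Tᶜ) (fun k _ hk => hγ2out k hk)).symm
    have hγ2T : ∑ k ∈ T, γ2 k = 0 := by
      apply Finset.sum_eq_zero
      intro k hk
      exact hγ2out k (by simp [hk])
    have hαle : ∀ k, α k ≤ β k := by
      intro k
      by_cases hk : k ∈ T
      · have := hγ2out k (fun h => (Finset.mem_compl.mp h) hk)
        simp only [hα, Pi.add_apply, this]
        simpa using hγ1le k
      · have := hγ1out k hk
        simp only [hα, Pi.add_apply, this]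
        simpa using hγ2le k
    have hαsum : ∑ k, α k = n := by
      simp only [hα, Pi.add_apply, Finset.sum_add_distrib, hγ1univ, hγ2univ]
      omega
    have hαT : ∑ k ∈ T, α k = s := by
      simp only [hα, Pi.add_apply, Finset.sum_add_distrib, hγ1sum, hγ2T]
      omega
    have hαA : α ∈ {α : Fin n → ℕ | ∑ k, α k = n ∧ (∑ k ∈ T, α k) ≤ i + 1} :=
      ⟨hαsum, by omega⟩
    set β' : Fin n → ℕ := fun k => β k - α k with hβ'
    have hsplit : β = α + β' := by
      funext k
      have := hαle k
      simp only [Pi.add_apply, hβ']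
      omega
    have hβ'sum : ∑ k, β' k = n * t := by
      have : ∑ k, β k = ∑ k, α k + ∑ k, β' k := by
        rw [hsplit]; simp [Finset.sum_add_distrib]
      omega
    have hβ'T : ∑ k ∈ T, β' k ≤ (i + 1) * t := by
      have : ∑ k ∈ T, β k = ∑ k ∈ T, α k + ∑ k ∈ T, β' k := by
        rw [hsplit]; simp [Finset.sum_add_distrib]
      omega
    rw [hsplit]
    exact AddSubmonoid.add_mem _ (AddSubmonoid.subset_closure hαA) (ih β' hβ'sum hβ'T)

/-- The monoid generated by A = {α ∈ ℕ^n : |α| = n, α_1+⋯+α_i ≤ i+1} is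
{β : n ∣ |β| and β_1+⋯+β_i ≤ (i+1)·(|β|/n)} : the semigroup is normal. -/
theorem stmt_14 (n i : ℕ) (hn : 3 ≤ n) (hi1 : 1 ≤ i) (hi2 : i ≤ n - 2)
    (A : Set (Fin n → ℕ))
    (hA : A = {α : Fin n → ℕ | ∑ k, α k = n ∧
      (∑ k ∈ Finset.univ.filter (fun k : Fin n => (k : ℕ) < i), α k) ≤ i + 1}) :
    (AddSubmonoid.closure A : Set (Fin n → ℕ)) =
      {β : Fin n → ℕ | ∃ t : ℕ, ∑ k, β k = n * t ∧
        (∑ k ∈ Finset.univ.filter (fun k : Fin n => (k : ℕ) < i), β k) ≤ (i + 1) * t} := by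
  subst hA
  ext β
  simp only [SetLike.mem_coe, Set.mem_setOf_eq]
  constructor
  · intro hβ
    induction hβ using AddSubmonoid.closure_induction with
    | mem a ha => exact ⟨1, by simpa using ha.1, by simpa using ha.2⟩
    | zero => exact ⟨0, by simp⟩
    | add x y hx hy ihx ihy =>
      obtain ⟨t1, hx1, hx2⟩ := ihx
      obtain ⟨t2, hy1, hy2⟩ := ihy
      refine ⟨t1 + t2, ?_, ?_⟩
      · simp only [Pi.add_apply, Finset.sum_add_distrib, hx1, hy1]; ring
      · simp only [Pi.add_apply, Finset.sum_add_distrib]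
        have : (i + 1) * (t1 + t2) = (i + 1) * t1 + (i + 1) * t2 := by ring
        omega
  · rintro ⟨t, h1, h2⟩
    exact key_14 n i (by omega) t β h1 h2
end

section
/- Let n ≥ 3 and 1 ≤ i ≤ n-2, and let h(t) = Σ_{k=0}^{(i+1)t} C(k+i-1,k)·C(nt-k+n-i-1, nt-k) for t ≥ 0 (and h(t) = 0 for t < 0). Define h_j = Σ_{s=0}^{j} (-1)^s·h(j-s)·C(n,s) for 0 ≤ j ≤ n-1. Then the formal power series Σ_{t≥0} h(t)·x^t equals (h_0 + h_1 x + ⋯ + h_{n-1} x^{n-1})/(1-x)^n, with h_0 = 1. -/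
/-!
Write `i = p + 1` and `n = p + q + 2`. Then `h t` is the part `k ≤ (p + 2) t` of the
Chu–Vandermonde convolution `∑_{k ≤ n t} C(p+k, p) C(q+nt-k, q) = C(nt + n - 1, n - 1)`.
Expanding the first factor of the complementary part by Vandermonde once more turns it into
`∑_{u+v=p} C((p+2)t + u, u) C(qt + q + v, q + v + 1)`, so `h` agrees on `ℕ` with a polynomial of
degree `≤ n - 1`. The coefficient of `x^j` in `(∑ h(t) x^t) (1 - x)^n` is `h_j` for `j < n`, and
for `j ≥ n` it is an `n`-th forward difference of `h`, which vanishes.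
-/

open Finset fwdDiff

open PowerSeries in
theorem Nat.sum_antidiagonal_add_choose_mul_add_choose (a b N : ℕ) :
    ∑ k ∈ antidiagonal N, (a + k.1).choose a * (b + k.2).choose b
      = (a + b + 1 + N).choose (a + b + 1) := by
  have h := congrArg (fun F : ℤ⟦X⟧ˣ ↦ coeff N F.val) (invOneSubPow_add ℤ (a + 1) (b + 1))
  simp only [Units.val_mul, show a + 1 + (b + 1) = a + b + 1 + 1 by ring,
    invOneSubPow_val_succ_eq_mk_add_choose, coeff_mul, coeff_mk] at h
  exact_mod_cast h.symm

theorem Nat.sum_range_add_choose_mul_add_choose (a b N : ℕ) :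
    ∑ k ∈ range (N + 1), (a + k).choose a * (b + (N - k)).choose b
      = (a + b + 1 + N).choose (a + b + 1) := by
  rw [← sum_antidiagonal_add_choose_mul_add_choose,
    Nat.sum_antidiagonal_eq_sum_range_succ_mk]

theorem Nat.sum_range_add_choose_mul_add_choose_tail (p q x M : ℕ) :
    ∑ j ∈ range M, (p + (x + 1 + j)).choose p * (q + (M - 1 - j)).choose q
      = ∑ u ∈ antidiagonal p, (x + u.1).choose u.1 * (M + (q + u.2)).choose (q + u.2 + 1) := by
  cases M with
  | zero => simp
  | succ M =>
    have hsplit (j : ℕ) : (p + (x + 1 + j)).choose p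
        = ∑ u ∈ antidiagonal p, (x + u.1).choose u.1 * (u.2 + j).choose u.2 := by
      rw [show p + (x + 1 + j) = x + j + 1 + p by ring, ← choose_symm_add,
        ← sum_antidiagonal_add_choose_mul_add_choose]
      refine sum_congr rfl fun u _ ↦ ?_
      rw [choose_symm_add, choose_symm_add, add_comm j]
    simp_rw [hsplit, sum_mul, Nat.add_sub_cancel]
    rw [sum_comm]
    refine sum_congr rfl fun u _ ↦ ?_
    simp_rw [mul_assoc, ← mul_sum]
    rw [sum_range_add_choose_mul_add_choose]
    ring_nf

theorem Nat.sum_range_add_choose_mul_add_choose_add_tail (p q x M : ℕ) :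
    ∑ k ∈ range (x + 1), (p + k).choose p * (q + (x + M - k)).choose q
      + ∑ u ∈ antidiagonal p, (x + u.1).choose u.1 * (M + (q + u.2)).choose (q + u.2 + 1)
      = (p + q + 1 + (x + M)).choose (p + q + 1) := by
  rw [← sum_range_add_choose_mul_add_choose p q (x + M), show x + M + 1 = x + 1 + M by ring,
    sum_range_add _ (x + 1) M, ← sum_range_add_choose_mul_add_choose_tail]
  congr 1
  refine sum_congr rfl fun j _ ↦ ?_
  rw [show x + M - (x + 1 + j) = M - 1 - j by omega]

section PolynomialFunctions

open Polynomial

def IsPolynomialOfDegreeLE {R : Type*} [CommRing R] (d : ℕ) (f : ℕ → R) : Prop :=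
  ∃ P : R[X], P.natDegree ≤ d ∧ ∀ t : ℕ, f t = P.eval (t : R)

namespace IsPolynomialOfDegreeLE

variable {R : Type*} [CommRing R] {d e : ℕ} {f g : ℕ → R}

theorem mono (hf : IsPolynomialOfDegreeLE d f) (hde : d ≤ e) : IsPolynomialOfDegreeLE e f :=
  let ⟨P, hP, hfP⟩ := hf
  ⟨P, hP.trans hde, hfP⟩

theorem sub (hf : IsPolynomialOfDegreeLE d f) (hg : IsPolynomialOfDegreeLE d g) :
    IsPolynomialOfDegreeLE d (f - g) :=
  let ⟨P, hP, hfP⟩ := hf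
  let ⟨Q, hQ, hgQ⟩ := hg
  ⟨P - Q, (natDegree_sub_le P Q).trans (max_le hP hQ), fun t ↦ by simp [hfP, hgQ]⟩

theorem mul (hf : IsPolynomialOfDegreeLE d f) (hg : IsPolynomialOfDegreeLE e g) :
    IsPolynomialOfDegreeLE (d + e) (f * g) :=
  let ⟨P, hP, hfP⟩ := hf
  let ⟨Q, hQ, hgQ⟩ := hg
  ⟨P * Q, natDegree_mul_le.trans (add_le_add hP hQ), fun t ↦ by simp [hfP, hgQ]⟩

theorem sum {ι : Type*} {s : Finset ι} {f : ι → ℕ → R}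
    (hf : ∀ i ∈ s, IsPolynomialOfDegreeLE d (f i)) :
    IsPolynomialOfDegreeLE d (∑ i ∈ s, f i) := by
  choose! P hP hfP using hf
  exact ⟨∑ i ∈ s, P i, natDegree_sum_le_of_forall_le s P hP, fun t ↦ by
    simp only [Finset.sum_apply, eval_finsetSum]
    exact sum_congr rfl fun i hi ↦ hfP i hi t⟩

theorem fwdDiff_iter_eq_zero (hf : IsPolynomialOfDegreeLE d f) {n : ℕ} (hdn : d < n) :
    (Δ_[1])^[n] f = 0 := by
  obtain ⟨P, hP, hfP⟩ := hf
  funext m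
  have := congrFun (fwdDiff_iter_eq_zero_of_degree_lt (hP.trans_lt hdn)) (m : R)
  rw [fwdDiff_iter_eq_sum_shift] at this ⊢
  simpa [hfP] using this

end IsPolynomialOfDegreeLE

theorem isPolynomialOfDegreeLE_choose {K : Type*} [Field K] [CharZero K] (α β c : ℕ) :
    IsPolynomialOfDegreeLE c fun t ↦ ((α * t + β).choose c : K) := by
  refine ⟨(c.factorial : K)⁻¹ • (descPochhammer K c).comp (C (α : K) * X + C (β : K)), ?_,
    fun t ↦ ?_⟩
  · refine (natDegree_smul_le _ _).trans (natDegree_comp_le.trans ?_)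
    rw [descPochhammer_natDegree]
    simpa using Nat.mul_le_mul_left c (natDegree_linear_le (a := (α : K)) (b := β))
  · have hc : (c.factorial : K) ≠ 0 := by exact_mod_cast c.factorial_ne_zero
    have := descPochhammer_eval_eq_descFactorial K (α * t + β) c
    push_cast at this
    rw [eval_smul, eval_comp, eval_add, eval_mul, eval_C, eval_C, eval_X, this,
      Nat.descFactorial_eq_factorial_mul_choose, Nat.cast_mul, smul_eq_mul,
      inv_mul_cancel_left₀ hc]

end PolynomialFunctions

section PowerSeries

open PowerSeries

variable {R : Type*} [CommRing R]

theorem PowerSeries.coeff_one_sub_X_pow (n s : ℕ) :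
    coeff s ((1 - X : R⟦X⟧) ^ n) = (-1) ^ s * n.choose s := by
  have : (1 - X : R⟦X⟧) ^ n = rescale (-1) ((1 + Polynomial.X) ^ n : Polynomial R) := by
    simp [sub_eq_add_neg]
  rw [this, coeff_rescale, Polynomial.coeff_coe, Polynomial.coeff_one_add_X_pow]

theorem PowerSeries.coeff_mk_mul_one_sub_X_pow (f : ℕ → R) (n j : ℕ) :
    coeff j (mk f * (1 - X) ^ n) = ∑ s ∈ range (j + 1), (-1) ^ s * n.choose s * f (j - s) := by
  rw [mul_comm, coeff_mul, Nat.sum_antidiagonal_eq_sum_range_succ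
    (fun s r ↦ coeff s ((1 - X : R⟦X⟧) ^ n) * coeff r (mk f))]
  simp [coeff_one_sub_X_pow]

theorem PowerSeries.coeff_mk_mul_one_sub_X_pow_of_le (f : ℕ → R) {n j : ℕ} (hnj : n ≤ j) :
    coeff j (mk f * (1 - X) ^ n) = (Δ_[1])^[n] f (j - n) := by
  rw [coeff_mk_mul_one_sub_X_pow, fwdDiff_iter_eq_sum_shift,
    ← sum_subset (range_subset_range.2 (by omega : n + 1 ≤ j + 1)), ← sum_range_reflect]
  · refine sum_congr rfl fun k hk ↦ ?_
    have hk : k ≤ n := Nat.lt_succ_iff.1 (mem_range.1 hk)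
    rw [Nat.add_sub_cancel, Nat.choose_symm hk, zsmul_eq_mul, smul_eq_mul, mul_one,
      show j - (n - k) = j - n + k by omega]
    push_cast
    rfl
  · intro s _ hs
    have hns : n < s := by simpa using hs
    simp [Nat.choose_eq_zero_of_lt hns]

theorem IsPolynomialOfDegreeLE.mk_mul_one_sub_X_pow {d n : ℕ} {f : ℕ → R}
    (hf : IsPolynomialOfDegreeLE d f) (hdn : d < n) :
    mk f * (1 - X) ^ n =
      ∑ j ∈ range n,
        C (∑ s ∈ range (j + 1), (-1) ^ s * n.choose s * f (j - s)) * X ^ j := by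
  ext j
  rw [map_sum]
  simp only [coeff_C_mul_X_pow, sum_ite_eq, mem_range]
  split_ifs with hj
  · exact coeff_mk_mul_one_sub_X_pow f n j
  · rw [coeff_mk_mul_one_sub_X_pow_of_le f (not_lt.1 hj), hf.fwdDiff_iter_eq_zero hdn,
      Pi.zero_apply]

end PowerSeries

theorem isPolynomialOfDegreeLE_sum_range_add_choose_mul_add_choose (p q : ℕ) :
    IsPolynomialOfDegreeLE (p + q + 1) fun t ↦ ((∑ k ∈ range ((p + 2) * t + 1),
      (p + k).choose p * (q + ((p + q + 2) * t - k)).choose q : ℕ) : ℚ) := by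
  have h_eq : (fun t ↦ ((∑ k ∈ range ((p + 2) * t + 1),
        (p + k).choose p * (q + ((p + q + 2) * t - k)).choose q : ℕ) : ℚ))
      = (fun t ↦ (((p + q + 2) * t + (p + q + 1)).choose (p + q + 1) : ℚ))
        - ∑ u ∈ antidiagonal p, (fun t ↦ (((p + 2) * t + u.1).choose u.1 : ℚ))
          * fun t ↦ ((q * t + (q + u.2)).choose (q + u.2 + 1) : ℚ) := by
    funext t
    simp only [Pi.sub_apply, Finset.sum_apply, Pi.mul_apply, eq_sub_iff_add_eq]
    have := Nat.sum_range_add_choose_mul_add_choose_add_tail p q ((p + 2) * t) (q * t)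
    rw [show (p + 2) * t + q * t = (p + q + 2) * t by ring, add_comm (p + q + 1)] at this
    exact_mod_cast this
  rw [h_eq]
  refine (isPolynomialOfDegreeLE_choose _ _ _).sub (IsPolynomialOfDegreeLE.sum fun u hu ↦
    ((isPolynomialOfDegreeLE_choose _ _ _).mul (isPolynomialOfDegreeLE_choose _ _ _)).mono ?_)
  have := mem_antidiagonal.1 hu
  omega

theorem stmt_15_general (n i : ℕ) (hi1 : 1 ≤ i) (hi2 : i ≤ n - 2)
    (h : ℕ → ℕ)
    (hh : ∀ t, h t = ∑ k ∈ Finset.range ((i + 1) * t + 1),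
      Nat.choose (k + i - 1) k * Nat.choose (n * t - k + n - i - 1) (n * t - k))
    (H : ℕ → ℤ)
    (hH : ∀ j, H j = ∑ s ∈ Finset.range (j + 1),
      (-1 : ℤ) ^ s * (h (j - s) : ℤ) * (Nat.choose n s : ℤ)) :
    ((PowerSeries.mk fun t => (h t : ℚ)) * (1 - PowerSeries.X) ^ n =
      ∑ j ∈ Finset.range n, PowerSeries.C ((H j : ℚ)) * PowerSeries.X ^ j) ∧
    H 0 = 1 := by
  obtain ⟨p, q, rfl, rfl⟩ : ∃ p q, i = p + 1 ∧ n = p + q + 2 :=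
    ⟨i - 1, n - i - 1, by omega, by omega⟩
  have h_eq : (fun t ↦ (h t : ℚ)) = fun t ↦ ((∑ k ∈ range ((p + 2) * t + 1),
      (p + k).choose p * (q + ((p + q + 2) * t - k)).choose q : ℕ) : ℚ) := by
    funext t
    rw [hh]
    refine congrArg _ (sum_congr (by ring_nf) fun k hk ↦ ?_)
    have hk := mem_range.1 hk
    rw [show k + (p + 1) - 1 = p + k by omega, Nat.choose_symm_add,
      show (p + q + 2) * t - k + (p + q + 2) - (p + 1) - 1 = q + ((p + q + 2) * t - k) by omega,
      Nat.choose_symm_add]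
  have h_poly := h_eq ▸ isPolynomialOfDegreeLE_sum_range_add_choose_mul_add_choose p q
  refine ⟨?_, by simp [hH, hh]⟩
  rw [h_poly.mk_mul_one_sub_X_pow (Nat.lt_succ_self _)]
  refine sum_congr rfl fun j _ ↦ ?_
  rw [hH]
  push_cast
  exact congrArg (fun c ↦ PowerSeries.C c * _) (sum_congr rfl fun s _ ↦ by ring)

/-- The Hilbert series of K[A]: Σ_t h(t) x^t = (h_0 + h_1 x + ⋯ + h_{n-1}x^{n-1})/(1-x)^n
with h_0 = 1, stated multiplied through by (1-x)^n. -/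
theorem stmt_15 (n i : ℕ) (hn : 3 ≤ n) (hi1 : 1 ≤ i) (hi2 : i ≤ n - 2)
    (h : ℕ → ℕ)
    (hh : ∀ t, h t = ∑ k ∈ Finset.range ((i + 1) * t + 1),
      Nat.choose (k + i - 1) k * Nat.choose (n * t - k + n - i - 1) (n * t - k))
    (H : ℕ → ℤ)
    (hH : ∀ j, H j = ∑ s ∈ Finset.range (j + 1),
      (-1 : ℤ) ^ s * (h (j - s) : ℤ) * (Nat.choose n s : ℤ)) :
    ((PowerSeries.mk fun t => (h t : ℚ)) * (1 - PowerSeries.X) ^ n =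
      ∑ j ∈ Finset.range n, PowerSeries.C ((H j : ℚ)) * PowerSeries.X ^ j) ∧
    H 0 = 1 :=
  stmt_15_general n i hi1 hi2 h hh H hH
end

section
/- Let n ≥ 3, 1 ≤ i ≤ n-2, and let Q = {x ∈ ℝ^n : x_k ≥ 0 for all k ∈ [n], L(x) ≥ 0} with L(x) = -(n-i-1)Σ_{k=1}^i x_k + (i+1)Σ_{k=i+1}^n x_k. Then this representation of Q by n+1 halfspaces is irreducible: omitting any one of the n+1 inequalities yields a strictly larger set. -/
/-!
`L` is the linear form `w ⬝ᵥ x` whose weight `w k` is `-(n - i - 1) < 0` for `k < i` and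
`i + 1 > 0` otherwise. Hence `L (e₀) < 0`, and for every `k` the vector `e_j - e_k` violates only
`x_k ≥ 0` as soon as `j ≠ k` carries the maximal weight `i + 1`; since `n - i ≥ 2`, at least two
coordinates (`i` and `i + 1`) carry it.
-/

open Finset Matrix

section LinearForm

variable {ι R : Type*} [Fintype ι] [DecidableEq ι] [CommRing R] [PartialOrder R]
  [IsStrictOrderedRing R]

theorem exists_neg_dotProduct_nonneg_of_single (w : ι → R) {k : ι} (hk : w k < 0) :
    ∃ x : ι → R, w ⬝ᵥ x < 0 ∧ ∀ m, 0 ≤ x m :=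
  ⟨Pi.single k 1, by simpa [dotProduct_single] using hk,
    fun m => by rcases eq_or_ne m k with rfl | h <;> simp [*]⟩

theorem exists_neg_apply_dotProduct_nonneg_of_le {j k : ι} (w : ι → R) (hjk : j ≠ k)
    (hw : w k ≤ w j) :
    ∃ x : ι → R, x k < 0 ∧ (∀ m, m ≠ k → 0 ≤ x m) ∧ 0 ≤ w ⬝ᵥ x := by
  refine ⟨Pi.single j 1 - Pi.single k 1, by simp [hjk.symm], fun m hm => ?_, ?_⟩
  · rcases eq_or_ne m j with rfl | h <;> simp [*]
  · simpa [dotProduct_sub, dotProduct_single] using hw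

end LinearForm

theorem mul_sum_lt_add_mul_sum_le_eq_dotProduct {n : ℕ} (i : ℕ) (a b : ℝ) (x : Fin n → ℝ) :
    a * ∑ k ∈ univ.filter (fun k : Fin n => (k : ℕ) < i), x k
      + b * ∑ k ∈ univ.filter (fun k : Fin n => i ≤ (k : ℕ)), x k
      = (fun k : Fin n => if (k : ℕ) < i then a else b) ⬝ᵥ x := by
  simp only [sum_filter, mul_sum, dotProduct, ← sum_add_distrib]
  refine sum_congr rfl fun k _ => ?_
  by_cases hk : (k : ℕ) < i <;> simp [hk, Nat.not_lt.mp, not_le.mpr]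

theorem stmt_18_general (n i : ℕ) (hi1 : 1 ≤ i) (hi2 : i ≤ n - 2)
    (L : (Fin n → ℝ) → ℝ)
    (hL : ∀ x, L x = -((n : ℝ) - i - 1) *
        (∑ k ∈ Finset.univ.filter (fun k : Fin n => (k : ℕ) < i), x k)
      + ((i : ℝ) + 1) *
        (∑ k ∈ Finset.univ.filter (fun k : Fin n => i ≤ (k : ℕ)), x k)) :
    (∀ k : Fin n, ∃ x : Fin n → ℝ,
      x k < 0 ∧ (∀ m, m ≠ k → 0 ≤ x m) ∧ 0 ≤ L x) ∧
    (∃ x : Fin n → ℝ, L x < 0 ∧ ∀ m, 0 ≤ x m) := by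
  set w : Fin n → ℝ := fun k => if (k : ℕ) < i then -((n : ℝ) - i - 1) else (i : ℝ) + 1
  have hLw : L = (w ⬝ᵥ ·) := funext fun x => by rw [hL, mul_sum_lt_add_mul_sum_le_eq_dotProduct]
  have hni : (i : ℝ) + 2 ≤ n := by exact_mod_cast (show i + 2 ≤ n by omega)
  have hw_le (k : Fin n) : w k ≤ i + 1 := by
    simp only [w]; split_ifs <;> linarith
  have hw_top (j : Fin n) (hj : i ≤ (j : ℕ)) : w j = i + 1 := if_neg (not_lt.mpr hj)
  subst hLw
  refine ⟨fun k => ?_, ?_⟩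
  · obtain ⟨j, hjk, hj⟩ : ∃ j : Fin n, j ≠ k ∧ i ≤ (j : ℕ) := by
      by_cases hk : (k : ℕ) = i
      · exact ⟨⟨i + 1, by omega⟩, fun h => by simp [Fin.ext_iff] at h; omega, by simp⟩
      · exact ⟨⟨i, by omega⟩, fun h => hk (by simp [← h]), le_rfl⟩
    exact exists_neg_apply_dotProduct_nonneg_of_le w hjk ((hw_le k).trans (hw_top j hj).ge)
  · refine exists_neg_dotProduct_nonneg_of_single w (k := ⟨0, by omega⟩) ?_
    simp only [w, if_pos (show (0 : ℕ) < i by omega)]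
    linarith

/-- The representation of Q by the n+1 halfspaces {x_k ≥ 0} and {L(x) ≥ 0} is
irreducible: dropping any inequality strictly enlarges the set. -/
theorem stmt_18 (n i : ℕ) (hn : 3 ≤ n) (hi1 : 1 ≤ i) (hi2 : i ≤ n - 2)
    (L : (Fin n → ℝ) → ℝ)
    (hL : ∀ x, L x = -((n : ℝ) - i - 1) *
        (∑ k ∈ Finset.univ.filter (fun k : Fin n => (k : ℕ) < i), x k)
      + ((i : ℝ) + 1) *
        (∑ k ∈ Finset.univ.filter (fun k : Fin n => i ≤ (k : ℕ)), x k)) :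
    (∀ k : Fin n, ∃ x : Fin n → ℝ,
      x k < 0 ∧ (∀ m, m ≠ k → 0 ≤ x m) ∧ 0 ≤ L x) ∧
    (∃ x : Fin n → ℝ, L x < 0 ∧ ∀ m, 0 ≤ x m) :=
  stmt_18_general n i hi1 hi2 L hL
end
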